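/- arXiv:1210.0741 — 5 statements merged into one kernel-verified Lean document; each statement's English description precedes it below -/
import Mathlib

section
/- For positive integers m and n, ∫_0^1 φ(mx)·φ(nx) dx = (1/12)·gcd(m,n)²/(mn), where φ(x) = {x} − 1/2 is the centered fractional part extended periodically. -/
/-!
The engine is the multiplication formula `∑_{j<m} φ((y + j)/m) = φ(y)`. Cutting `[0, 1]` into
the intervals `[j/m, (j+1)/m]` gives `∫₀¹ φ(mx) φ(nx) dx = m⁻¹ ∫₀¹ φ(u) ∑_{j<m} φ((nu + nj)/m) du`,
and when `n` is coprime to `m` the residues `nj mod m` run over all of `ℤ/m`, so the inner sum is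
`φ(nu)`. Doing this twice reduces the coprime case to `∫₀¹ φ² = 1/12`. For `m = dm'`, `n = dn'`
the integrand is `G(dx)` with `G(y) = φ(m'y) φ(n'y)` 1-periodic, and `∫₀¹ G(dx) dx = ∫₀¹ G`.
-/

open MeasureTheory Finset Function

noncomputable def sawtooth (x : ℝ) : ℝ := Int.fract x - 1 / 2

lemma sawtooth_periodic : Periodic sawtooth 1 := fun x => by
  simp [sawtooth]

lemma sawtooth_add_natCast (x : ℝ) (k : ℕ) : sawtooth (x + k) = sawtooth x := by
  simp [sawtooth]

lemma sawtooth_of_mem_Ico {x : ℝ} (hx : x ∈ Set.Ico 0 1) : sawtooth x = x - 1 / 2 := by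
  rw [sawtooth, Int.fract_eq_self.2 hx]

lemma abs_sawtooth_le (x : ℝ) : |sawtooth x| ≤ 1 / 2 := by
  rw [sawtooth, abs_le]
  constructor <;> linarith [Int.fract_nonneg x, Int.fract_lt_one x]

lemma measurable_sawtooth : Measurable sawtooth := measurable_fract.sub_const _

lemma intervalIntegrable_sawtooth_comp_mul_sawtooth_comp {f g : ℝ → ℝ} (hf : Measurable f)
    (hg : Measurable g) (a b : ℝ) :
    IntervalIntegrable (fun x => sawtooth (f x) * sawtooth (g x)) volume a b := by
  refine intervalIntegrable_iff.2 (Measure.integrableOn_of_bounded (M := 1 / 2 * (1 / 2))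
    measure_Ioc_lt_top.ne ?_ (Filter.Eventually.of_forall fun x => ?_))
  · exact ((measurable_sawtooth.comp hf).mul (measurable_sawtooth.comp hg)).aestronglyMeasurable
  · rw [norm_mul]
    exact mul_le_mul (abs_sawtooth_le _) (abs_sawtooth_le _) (abs_nonneg _) (by norm_num)

theorem Function.Periodic.sum_range_add_mul {M : Type*} [AddCommMonoid M] {f : ℕ → M} {m : ℕ}
    (hf : Periodic f m) (a : ℕ) {n : ℕ} (hn : n.Coprime m) :
    ∑ j ∈ range m, f (a + n * j) = ∑ j ∈ range m, f j := by
  rcases m.eq_zero_or_pos with rfl | hm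
  · simp
  have maps : Set.MapsTo (fun j => (a + n * j) % m) (range m) (range m) :=
    fun j _ => mem_range.2 (Nat.mod_lt _ hm)
  have inj : Set.InjOn (fun j => (a + n * j) % m) (range m) := fun i hi j hj hij =>
    ((Nat.ModEq.add_left_cancel' a hij).cancel_left_of_coprime hn.symm).eq_of_lt_of_lt
      (mem_range.1 hi) (mem_range.1 hj)
  calc ∑ j ∈ range m, f (a + n * j) = ∑ j ∈ range m, f ((a + n * j) % m) := by
        simp only [hf.map_mod_nat]
    _ = ∑ j ∈ range m, f j :=
        sum_nbij _ maps inj (surjOn_of_injOn_of_card_le _ maps inj le_rfl) fun _ _ => rfl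

lemma periodic_sawtooth_add_natCast_div (z : ℝ) {m : ℕ} (hm : m ≠ 0) :
    Periodic (fun j : ℕ => sawtooth ((z + j) / m)) m := fun j => by
  have : (z + ↑(j + m)) / m = (z + j) / m + 1 := by
    push_cast
    field_simp
    ring
  simp only [this, sawtooth_periodic _]

lemma sum_sawtooth_add_div_of_mem_Ico {m : ℕ} (hm : m ≠ 0) {r : ℝ} (hr : r ∈ Set.Ico 0 1) :
    ∑ j ∈ range m, sawtooth ((r + j) / m) = sawtooth r := by
  have hm' : (0 : ℝ) < m := by positivity
  have term : ∀ j ∈ range m, sawtooth ((r + j) / m) = (r + j) / m - 1 / 2 := fun j hj => by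
    have hj : (j : ℝ) + 1 ≤ m := by exact_mod_cast mem_range.1 hj
    refine sawtooth_of_mem_Ico ⟨by have := hr.1; positivity, ?_⟩
    rw [div_lt_one hm']
    linarith [hr.2]
  have gauss : (∑ j ∈ range m, (j : ℝ)) * 2 = m * (m - 1) := by
    have := Finset.sum_range_id_mul_two m
    rw [← Nat.cast_inj (R := ℝ)] at this
    push_cast [Nat.cast_sub (Nat.one_le_iff_ne_zero.2 hm)] at this
    exact this
  rw [sum_congr rfl term, sum_sub_distrib, ← sum_div, sum_add_distrib, sum_const, card_range,
    sum_const, card_range, sawtooth_of_mem_Ico hr]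
  field_simp
  linear_combination gauss

lemma sum_sawtooth_add_div {m : ℕ} (hm : m ≠ 0) (y : ℝ) :
    ∑ j ∈ range m, sawtooth ((y + j) / m) = sawtooth y := by
  set S : ℝ → ℝ := fun y => ∑ j ∈ range m, sawtooth ((y + j) / m)
  have hSper : Periodic S 1 := fun y => by
    simpa [S, add_comm, add_left_comm] using
      (periodic_sawtooth_add_natCast_div y hm).sum_range_add_mul 1 (Nat.coprime_one_left m)
  calc S y = S (Int.fract y) := by
        rw [← hSper.sub_int_mul_eq ⌊y⌋, mul_one, Int.self_sub_floor]
    _ = sawtooth (Int.fract y) :=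
        sum_sawtooth_add_div_of_mem_Ico hm ⟨Int.fract_nonneg y, Int.fract_lt_one y⟩
    _ = sawtooth y := by simp [sawtooth]

lemma sum_sawtooth_add_mul_div {m n : ℕ} (hm : m ≠ 0) (h : n.Coprime m) (z : ℝ) :
    ∑ j ∈ range m, sawtooth ((z + n * j) / m) = sawtooth z := by
  simpa using ((periodic_sawtooth_add_natCast_div z hm).sum_range_add_mul 0 h).trans
    (sum_sawtooth_add_div hm z)

theorem intervalIntegral_comp_natCast_mul_eq_sum {E : Type*} [NormedAddCommGroup E]
    [NormedSpace ℝ E] {F : ℝ → E} {m : ℕ} (hm : m ≠ 0) (hF : IntervalIntegrable F volume 0 m) :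
    ∫ x in (0 : ℝ)..1, F (m * x) = (m : ℝ)⁻¹ • ∫ u in (0 : ℝ)..1, ∑ j ∈ range m, F (u + j) := by
  have piece : ∀ j < m, IntervalIntegrable F volume j (j + 1) := fun j hj => by
    refine hF.mono_set (Set.uIcc_subset_uIcc ?_ ?_) <;> simp <;> norm_cast <;> omega
  rw [intervalIntegral.integral_comp_mul_left _ (Nat.cast_ne_zero.2 hm), mul_zero, mul_one,
    intervalIntegral.integral_finsetSum fun j hj => by
      simpa using (piece j (mem_range.1 hj)).comp_add_right (j : ℝ)]
  congr 1
  simpa [intervalIntegral.integral_comp_add_right, add_comm]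
    using (intervalIntegral.sum_integral_adjacent_intervals (a := fun j : ℕ => (j : ℝ))
      fun j hj => by simpa using piece j hj).symm

theorem Function.Periodic.intervalIntegral_comp_natCast_mul {E : Type*} [NormedAddCommGroup E]
    [NormedSpace ℝ E] {G : ℝ → E} (hG : Periodic G 1) {k : ℕ} (hk : k ≠ 0)
    (hint : IntervalIntegrable G volume 0 k) :
    ∫ x in (0 : ℝ)..1, G (k * x) = ∫ x in (0 : ℝ)..1, G x := by
  have sum_eq : ∀ u, ∑ j ∈ range k, G (u + j) = (k : ℝ) • G u := fun u => by
    simp [fun j : ℕ => by simpa using hG.nat_mul j u, ← Nat.cast_smul_eq_nsmul ℝ]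
  rw [intervalIntegral_comp_natCast_mul_eq_sum hk hint]
  simp only [sum_eq, intervalIntegral.integral_smul, smul_smul,
    inv_mul_cancel₀ (Nat.cast_ne_zero.2 hk : (k : ℝ) ≠ 0), one_smul]

noncomputable def sawtoothCorrelation (m n : ℕ) : ℝ :=
  ∫ x in (0 : ℝ)..1, sawtooth (m * x) * sawtooth (n * x)

lemma sawtoothCorrelation_comm (m n : ℕ) :
    sawtoothCorrelation m n = sawtoothCorrelation n m := by
  unfold sawtoothCorrelation
  congr 1
  ext x
  ring

lemma sawtoothCorrelation_one_one : sawtoothCorrelation 1 1 = 1 / 12 := by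
  have on_Ioo : Set.EqOn (fun x => sawtooth x * sawtooth x) (fun x => (x - 1 / 2) * (x - 1 / 2))
      (Set.Ioo 0 1) := fun x hx => by
    simp only [sawtooth_of_mem_Ico (Set.Ioo_subset_Ico_self hx)]
  simp only [sawtoothCorrelation, Nat.cast_one, one_mul]
  rw [intervalIntegral.integral_of_le zero_le_one, integral_Ioc_eq_integral_Ioo,
    setIntegral_congr_fun measurableSet_Ioo on_Ioo, ← integral_Ioc_eq_integral_Ioo,
    ← intervalIntegral.integral_of_le zero_le_one,
    intervalIntegral.integral_comp_sub_right (fun x => x * x)]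
  norm_num [← sq]

lemma sawtoothCorrelation_mul_mul {k : ℕ} (hk : k ≠ 0) (m n : ℕ) :
    sawtoothCorrelation (k * m) (k * n) = sawtoothCorrelation m n := by
  have hG : Periodic (fun y => sawtooth (m * y) * sawtooth (n * y)) 1 := fun y => by
    simp only [mul_add, mul_one, sawtooth_add_natCast]
  refine (intervalIntegral.integral_congr fun x _ => ?_).trans
    (hG.intervalIntegral_comp_natCast_mul hk
      (intervalIntegrable_sawtooth_comp_mul_sawtooth_comp (by fun_prop) (by fun_prop) _ _))
  simp only [Nat.cast_mul]
  ring_nf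

lemma sawtoothCorrelation_of_coprime_left {m n : ℕ} (hm : m ≠ 0) (h : n.Coprime m) :
    sawtoothCorrelation m n = (m : ℝ)⁻¹ * sawtoothCorrelation 1 n := by
  set F : ℝ → ℝ := fun u => sawtooth u * sawtooth (n / m * u)
  have hF : IntervalIntegrable F volume 0 m :=
    intervalIntegrable_sawtooth_comp_mul_sawtooth_comp (by fun_prop) (by fun_prop) _ _
  have lhs : ∀ x : ℝ, F (m * x) = sawtooth (m * x) * sawtooth (n * x) := fun x => by
    simp only [F]
    field_simp
  have rhs : ∀ u : ℝ, ∑ j ∈ range m, F (u + j) = sawtooth u * sawtooth (n * u) := fun u => by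
    simp only [F, sawtooth_add_natCast, ← mul_sum]
    rw [← sum_sawtooth_add_mul_div hm h (n * u)]
    congr 2 with j
    field_simp
  simpa [sawtoothCorrelation, lhs, rhs] using intervalIntegral_comp_natCast_mul_eq_sum hm hF

lemma sawtoothCorrelation_of_coprime {m n : ℕ} (hm : m ≠ 0) (hn : n ≠ 0) (h : m.Coprime n) :
    sawtoothCorrelation m n = 1 / 12 / (m * n) := by
  rw [sawtoothCorrelation_of_coprime_left hm h.symm, sawtoothCorrelation_comm,
    sawtoothCorrelation_of_coprime_left hn (Nat.coprime_one_left n), sawtoothCorrelation_one_one]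
  field_simp

theorem stmt1 (m n : ℕ) (hm : 0 < m) (hn : 0 < n) :
    ∫ x in (0:ℝ)..1,
        (Int.fract (m * x) - 1/2) * (Int.fract (n * x) - 1/2)
      = (1/12) * (Nat.gcd m n : ℝ)^2 / (m * n) := by
  obtain ⟨m', n', hcop, hm', hn'⟩ := Nat.exists_coprime m n
  set d := m.gcd n
  have hd : d ≠ 0 := (Nat.gcd_pos_of_pos_left n hm).ne'
  change sawtoothCorrelation m n = _
  rw [hm', hn', mul_comm m', mul_comm n', sawtoothCorrelation_mul_mul hd,
    sawtoothCorrelation_of_coprime (by rintro rfl; omega) (by rintro rfl; omega) hcop]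
  push_cast
  field_simp
end

section
/- Let v < w be positive integers and J ≥ 1 an integer. Then ∑_{j₁,j₂=J+1}^∞ (j₁ j₂)^{-1} · [j₁ v = j₂ w] ≤ (2/J) · gcd(v,w)/√(vw). -/
set_option maxHeartbeats 800000 in
theorem stmt3 (v w J : ℕ) (hv : 0 < v) (hvw : v < w) (hJ : 1 ≤ J) :
    (∑' j₁ : ℕ, ∑' j₂ : ℕ,
        (if J + 1 ≤ j₁ ∧ J + 1 ≤ j₂ ∧ j₁ * v = j₂ * w then ((j₁ * j₂ : ℝ))⁻¹ else 0))
      ≤ (2 / J) * (Nat.gcd v w : ℝ) / Real.sqrt ((v * w : ℕ)) := by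
  classical
  have hw : 0 < w := hv.trans hvw
  set d := Nat.gcd v w with hd
  have hd0 : 0 < d := Nat.gcd_pos_of_pos_left _ hv
  set v' := v / d with hv'def
  set w' := w / d with hw'def
  have hv' : d * v' = v := Nat.mul_div_cancel' (Nat.gcd_dvd_left v w)
  have hw' : d * w' = w := Nat.mul_div_cancel' (Nat.gcd_dvd_right v w)
  have hv'0 : 0 < v' := by
    rcases Nat.eq_zero_or_pos v' with h | h
    · rw [h, Nat.mul_zero] at hv'; omega
    · exact h
  have hw'0 : 0 < w' := by
    rcases Nat.eq_zero_or_pos w' with h | h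
    · rw [h, Nat.mul_zero] at hw'; omega
    · exact h
  have hcop : Nat.Coprime v' w' := Nat.coprime_div_gcd_div_gcd hd0
  -- the function giving the inner sum
  set F : ℕ → ℝ := fun j₁ =>
    if J + 1 ≤ j₁ ∧ J + 1 ≤ j₁ * v / w ∧ j₁ * v = j₁ * v / w * w then
      ((j₁ : ℝ) * ((j₁ * v / w : ℕ) : ℝ))⁻¹ else 0 with hF
  have inner : ∀ j₁ : ℕ,
      (∑' j₂ : ℕ, (if J + 1 ≤ j₁ ∧ J + 1 ≤ j₂ ∧ j₁ * v = j₂ * w then ((j₁ * j₂ : ℝ))⁻¹ else 0))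
        = F j₁ := by
    intro j₁
    apply tsum_eq_single
    intro b hb
    rw [if_neg]
    rintro ⟨h1, h2, h3⟩
    exact hb (by rw [h3, Nat.mul_div_cancel b hw])
  rw [tsum_congr inner]
  -- the comparison function
  set c : ℝ := (d : ℝ) ^ 2 / ((v : ℝ) * w) with hc
  set g₀ : ℕ → ℝ := fun k => if J / v' < k then ((k : ℝ) ^ 2)⁻¹ else 0 with hg₀
  have hvw' : (v : ℝ) * w = (d : ℝ) ^ 2 * v' * w' := by
    rw [← hv', ← hw']; push_cast; ring
  have hc0 : 0 < c := by
    rw [hc]; positivity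
  have hg₀nonneg : ∀ k, 0 ≤ g₀ k := by
    intro k; rw [hg₀]; dsimp only; split_ifs <;> positivity
  have hFnonneg : ∀ j, 0 ≤ F j := by
    intro j; rw [hF]; dsimp only; split_ifs <;> positivity
  -- key pointwise bound
  have hkey : ∀ k : ℕ, F (k * w') ≤ c * g₀ k := by
    intro k
    have hmul : k * w' * v = k * v' * w := by
      rw [← hv', ← hw']; ring
    have hdiv : k * w' * v / w = k * v' := by rw [hmul, Nat.mul_div_cancel _ hw]
    rw [hF]
    dsimp only
    rw [hdiv]
    by_cases hcond : J + 1 ≤ k * w' ∧ J + 1 ≤ k * v' ∧ k * w' * v = k * v' * w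
    · rw [if_pos hcond]
      obtain ⟨h1, h2, _⟩ := hcond
      have hk0 : 0 < k := by
        rcases Nat.eq_zero_or_pos k with rfl | h
        · simp at h2
        · exact h
      have hlt : J / v' < k := (Nat.div_lt_iff_lt_mul hv'0).2 (by omega)
      rw [hg₀]
      dsimp only
      rw [if_pos hlt]
      apply le_of_eq
      have hk0' : (0 : ℝ) < k := by exact_mod_cast hk0
      have hv'0' : (0 : ℝ) < v' := by exact_mod_cast hv'0
      have hw'0' : (0 : ℝ) < w' := by exact_mod_cast hw'0
      have hd0' : (0 : ℝ) < d := by exact_mod_cast hd0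
      rw [hc, hvw']
      push_cast
      field_simp
    · rw [if_neg hcond]
      exact mul_nonneg hc0.le (hg₀nonneg k)
  -- reindex the outer sum over multiples of w'
  have hinj : Function.Injective (fun k : ℕ => k * w') := fun a b h =>
    Nat.eq_of_mul_eq_mul_right hw'0 h
  have hsupp : Function.support F ⊆ Set.range fun k : ℕ => k * w' := by
    intro j hj
    rw [Function.mem_support, hF] at hj
    dsimp only at hj
    by_cases hcond : J + 1 ≤ j ∧ J + 1 ≤ j * v / w ∧ j * v = j * v / w * w
    · obtain ⟨h1, h2, h3⟩ := hcond
      have hdvd : w ∣ j * v := Dvd.intro_left _ h3.symm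
      have hdvd' : w' ∣ j * v' := by
        have : d * w' ∣ d * (j * v') := by
          rw [← hw'] at hdvd
          calc d * w' ∣ j * v := hdvd
            _ = d * (j * v') := by rw [← hv']; ring
        exact (mul_dvd_mul_iff_left hd0.ne').1 this
      have : w' ∣ j := (Nat.Coprime.dvd_of_dvd_mul_right hcop.symm) hdvd'
      obtain ⟨m, hm⟩ := this
      exact ⟨m, by rw [hm]; ring⟩
    · exact absurd (if_neg hcond) hj
  have hre : ∑' j₁, F j₁ = ∑' k, F (k * w') := (Function.Injective.tsum_eq hinj hsupp).symm
  -- summability facts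
  have hg₀sum : Summable g₀ := by
    apply Summable.of_nonneg_of_le hg₀nonneg (fun k => ?_)
      ((Real.summable_nat_pow_inv (p := 2)).2 one_lt_two)
    rw [hg₀]; dsimp only; split_ifs with h
    · exact le_rfl
    · positivity
  have hgsum : Summable fun k => c * g₀ k := hg₀sum.mul_left c
  have hFsum : Summable fun k => F (k * w') :=
    Summable.of_nonneg_of_le (fun k => hFnonneg _) hkey hgsum
  -- tail bound
  have htail : ∑' k, g₀ k ≤ 2 / ((J / v' : ℕ) + 1 : ℝ) := by
    apply Summable.tsum_le_of_sum_le hg₀sum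
    intro s
    calc ∑ i ∈ s, g₀ i = ∑ i ∈ s.filter (fun i => J / v' < i), ((i : ℝ) ^ 2)⁻¹ := by
          rw [Finset.sum_filter]
      _ ≤ ∑ i ∈ Finset.Ioo (J / v') (s.sup id + 1), ((i : ℝ) ^ 2)⁻¹ := by
          apply Finset.sum_le_sum_of_subset_of_nonneg
          · intro i hi
            rw [Finset.mem_filter] at hi
            rw [Finset.mem_Ioo]
            exact ⟨hi.2, Nat.lt_succ_of_le (Finset.le_sup (f := id) hi.1)⟩
          · intros; positivity
      _ ≤ 2 / ((J / v' : ℕ) + 1 : ℝ) := sum_Ioo_inv_sq_le _ _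
  -- assemble
  have hchain : ∑' j₁, F j₁ ≤ c * (2 / ((J / v' : ℕ) + 1 : ℝ)) := by
    rw [hre]
    calc ∑' k, F (k * w') ≤ ∑' k, c * g₀ k := Summable.tsum_le_tsum hkey hFsum hgsum
      _ = c * ∑' k, g₀ k := tsum_mul_left
      _ ≤ c * (2 / ((J / v' : ℕ) + 1 : ℝ)) := by
          exact mul_le_mul_of_nonneg_left htail hc0.le
  apply hchain.trans
  -- final arithmetic
  set M : ℕ := J / v' + 1 with hM
  have hMv' : J + 1 ≤ M * v' := by
    have : J / v' < M := Nat.lt_succ_self _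
    have := (Nat.div_lt_iff_lt_mul hv'0).1 this
    omega
  set a : ℝ := Real.sqrt ((v * w : ℕ)) with ha
  have ha2 : a ^ 2 = (v : ℝ) * w := by
    rw [ha]
    push_cast
    exact Real.sq_sqrt (by positivity)
  have ha0 : 0 < a := by
    rw [ha]
    apply Real.sqrt_pos.2
    push_cast
    positivity
  have hav : (v : ℝ) ≤ a := by
    rw [ha]
    push_cast
    rw [show ((v : ℝ) * w) = (v : ℝ) * w from rfl]
    have : (v : ℝ) = Real.sqrt ((v : ℝ) ^ 2) := (Real.sqrt_sq (by positivity)).symm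
    rw [this]
    apply Real.sqrt_le_sqrt
    have : (v : ℝ) ≤ w := by exact_mod_cast hvw.le
    nlinarith [Nat.cast_nonneg (α := ℝ) v]
  have hJ0' : (0 : ℝ) < J := by exact_mod_cast hJ
  have hM0' : (0 : ℝ) < M := by positivity
  have hd0' : (0 : ℝ) < d := by exact_mod_cast hd0
  have hJdMa : (J : ℝ) * d ≤ M * a := by
    have h1 : (M : ℝ) * v ≤ M * a := by
      apply mul_le_mul_of_nonneg_left hav (by positivity)
    have h2 : (J : ℝ) * d ≤ M * v := by
      rw [← hv']
      have : (J + 1 : ℝ) ≤ (M : ℝ) * v' := by exact_mod_cast hMv'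
      have hv'0' : (0 : ℝ) < v' := by exact_mod_cast hv'0
      push_cast at this ⊢
      nlinarith [this, hd0', hv'0']
    linarith
  have hcast : ((J / v' : ℕ) : ℝ) + 1 = (M : ℝ) := by rw [hM]; push_cast; ring
  rw [hcast, hc, ← ha2]
  rw [div_mul_div_comm, div_mul_eq_mul_div, div_div,
    div_le_div_iff₀ (by positivity) (by positivity)]
  nlinarith [mul_le_mul_of_nonneg_left hJdMa (by positivity : (0:ℝ) ≤ 2 * d * a)]
end

section
/- Let t ∈ (0,1), K a positive integer, β₁,...,β_N distinct multi-indices in ℕ^K, and c₁,...,c_N complex numbers. Write t^{|β−μ|} := ∏_{j=1}^K t^{|β^{(j)} − μ^{(j)}|}. Then ∑_{k,ℓ=1}^N t^{|β_k − β_ℓ|} c_k conj(c_ℓ) = ∫_{𝕋^K} |∑_{j=1}^N c_j z^{β_j}|² P_K(t,z) dσ_K(z), where P_K(t,z) = ∏_{k=1}^K (1−t²)/|1 − t z_k|² is the Poisson kernel and σ_K is normalized Haar measure on the K-torus. In particular the quadratic form is nonnegative. -/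
/-!
The Poisson kernel has the Fourier expansion `(1 - t²) / |1 - t z|² = ∑_{n ∈ ℤ} t^|n| z^n` on the
unit circle (two geometric series), so by orthogonality of the characters `z ↦ zⁿ` integrating
`zⁿ` against it gives `t^|n|`. On the torus, `|∑ cᵢ z^βᵢ|²` expands into
`∑ c_k conj(c_l) z^(β_k - β_l)` because `conj z_j = z_j⁻¹`, and both this monomial and the
product kernel split coordinatewise, so Fubini reduces each term to the one-dimensional identity.
Nonnegativity is that of the integrand.
-/

open MeasureTheory Finset Complex Real ComplexConjugate

noncomputable def expTwoPiI (θ : ℝ) : ℂ := exp (2 * π * I * θ)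

lemma norm_expTwoPiI (θ : ℝ) : ‖expTwoPiI θ‖ = 1 := by
  rw [expTwoPiI, Complex.norm_exp]
  simp

lemma expTwoPiI_ne_zero (θ : ℝ) : expTwoPiI θ ≠ 0 := Complex.exp_ne_zero _

@[fun_prop]
lemma continuous_expTwoPiI : Continuous expTwoPiI := by
  unfold expTwoPiI
  fun_prop

lemma integral_expTwoPiI_zpow (n : ℤ) :
    ∫ θ in Set.Icc (0 : ℝ) 1, expTwoPiI θ ^ n = if n = 0 then 1 else 0 := by
  have h : ∀ θ : ℝ, expTwoPiI θ ^ n = exp (n * (2 * π * I) * θ) := fun θ => by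
    rw [expTwoPiI, ← Complex.exp_int_mul]
    ring_nf
  simp_rw [h]
  rw [integral_Icc_eq_integral_Ioc, ← intervalIntegral.integral_of_le zero_le_one]
  split_ifs with hn
  · simp [hn]
  · have hc : (n : ℂ) * (2 * π * I) ≠ 0 := by simp [hn, Real.pi_ne_zero]
    rw [integral_exp_mul_complex hc]
    simp [Complex.exp_int_mul_two_pi_mul_I]

noncomputable def radialPoissonKernel (t : ℝ) (z : ℂ) : ℝ := (1 - t ^ 2) / ‖1 - t * z‖ ^ 2

lemma one_sub_mul_ne_zero_of_norm_eq_one {t : ℝ} (ht : |t| < 1) {z : ℂ} (hz : ‖z‖ = 1) :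
    1 - t * z ≠ 0 := fun h => by
  have : ‖(t : ℂ) * z‖ = 1 := by rw [← sub_eq_zero.1 h, norm_one]
  simp [hz] at this
  linarith

lemma continuous_radialPoissonKernel_expTwoPiI {t : ℝ} (ht : |t| < 1) :
    Continuous fun θ => radialPoissonKernel t (expTwoPiI θ) :=
  continuous_const.div (by fun_prop) fun θ =>
    pow_ne_zero 2 (norm_ne_zero_iff.2 (one_sub_mul_ne_zero_of_norm_eq_one ht (norm_expTwoPiI θ)))

lemma radialPoissonKernel_nonneg {t : ℝ} (ht : |t| ≤ 1) (z : ℂ) : 0 ≤ radialPoissonKernel t z :=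
  div_nonneg (sub_nonneg.2 (sq_le_one_iff_abs_le_one t |>.2 ht)) (sq_nonneg _)

lemma inv_one_sub_add_conj_mul_inv_one_sub_conj {w : ℂ} (hw : w ≠ 1) :
    (1 - w)⁻¹ + conj w * (1 - conj w)⁻¹ = ((1 - ‖w‖ ^ 2) / ‖1 - w‖ ^ 2 : ℝ) := by
  have h1 : 1 - w ≠ 0 := sub_ne_zero.2 hw.symm
  have h2 : 1 - conj w ≠ 0 := by rw [← map_one (conj), ← map_sub]; exact (map_ne_zero _).2 h1
  have hden : (‖1 - w‖ : ℂ) ^ 2 = (1 - w) * (1 - conj w) := by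
    rw [← Complex.mul_conj', map_sub, map_one]
  push_cast
  rw [hden, ← Complex.mul_conj']
  field_simp
  ring

lemma hasSum_poisson_series {t : ℝ} (ht : |t| < 1) {z : ℂ} (hz : ‖z‖ = 1) :
    HasSum (fun m : ℤ => (t : ℂ) ^ m.natAbs * z ^ m) (radialPoissonKernel t z) := by
  have hw : ‖(t : ℂ) * z‖ = |t| := by simp [hz]
  have hw' : ‖conj ((t : ℂ) * z)‖ < 1 := by rwa [Complex.norm_conj, hw]
  have hpos : HasSum (fun n : ℕ => (t : ℂ) ^ (n : ℤ).natAbs * z ^ (n : ℤ)) (1 - t * z)⁻¹ := by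
    refine (hasSum_geometric_of_norm_lt_one (hw ▸ ht)).congr_fun fun n => ?_
    simp [mul_pow]
  have hneg : HasSum (fun n : ℕ => (t : ℂ) ^ (-(n + 1 : ℤ)).natAbs * z ^ (-(n + 1 : ℤ)))
      (conj ((t : ℂ) * z) * (1 - conj ((t : ℂ) * z))⁻¹) := by
    refine ((hasSum_geometric_of_norm_lt_one hw').mul_left _).congr_fun fun n => ?_
    rw [show (-(n + 1 : ℤ)).natAbs = n + 1 by omega, ← pow_succ', zpow_neg, ← Nat.cast_succ,
      zpow_natCast, ← inv_pow, Complex.inv_eq_conj hz]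
    simp [mul_pow]
  have hw1 : (t : ℂ) * z ≠ 1 := (sub_ne_zero.1 (one_sub_mul_ne_zero_of_norm_eq_one ht hz)).symm
  have := HasSum.of_nat_of_neg_add_one (f := fun m : ℤ => (t : ℂ) ^ m.natAbs * z ^ m) hpos hneg
  rwa [inv_one_sub_add_conj_mul_inv_one_sub_conj hw1, hw, sq_abs] at this

lemma integral_expTwoPiI_zpow_mul_radialPoissonKernel {t : ℝ} (ht : |t| < 1) (n : ℤ) :
    ∫ θ in Set.Icc (0 : ℝ) 1, expTwoPiI θ ^ n * radialPoissonKernel t (expTwoPiI θ)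
      = (t : ℂ) ^ n.natAbs := by
  set F : ℤ → ℝ → ℂ := fun m θ => (t : ℂ) ^ m.natAbs * expTwoPiI θ ^ (n + m)
  have hF_int (m : ℤ) : Integrable (F m) (volume.restrict (Set.Icc (0 : ℝ) 1)) :=
    (continuous_const.mul (continuous_expTwoPiI.zpow₀ _ fun θ => .inl (expTwoPiI_ne_zero θ))
      ).integrableOn_Icc
  have hF_norm (m : ℤ) : ∫ θ in Set.Icc (0 : ℝ) 1, ‖F m θ‖ = |t| ^ m.natAbs := by
    simp [F, norm_expTwoPiI]
  have hF_sum : Summable fun m : ℤ => |t| ^ m.natAbs := by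
    apply Summable.of_nat_of_neg <;> simpa using summable_geometric_of_lt_one (abs_nonneg t) ht
  have hF_integral (m : ℤ) :
      ∫ θ in Set.Icc (0 : ℝ) 1, F m θ = if m = -n then (t : ℂ) ^ n.natAbs else 0 := by
    rw [integral_const_mul, integral_expTwoPiI_zpow]
    split_ifs <;> first | omega | simp_all
  have hseries (θ : ℝ) : ∑' m, F m θ = expTwoPiI θ ^ n * radialPoissonKernel t (expTwoPiI θ) := by
    refine (((hasSum_poisson_series ht (norm_expTwoPiI θ)).mul_left (expTwoPiI θ ^ n)).congr_fun
      fun m => ?_).tsum_eq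
    simp only [F, zpow_add₀ (expTwoPiI_ne_zero θ)]
    ring
  simp_rw [← hseries]
  refine (hasSum_integral_of_summable_integral_norm hF_int ?_).unique ?_
  · simpa only [hF_norm] using hF_sum
  · simpa only [hF_integral] using hasSum_ite_eq (-n) _

lemma integral_Icc_pi_prod {ι 𝕜 : Type*} [Fintype ι] [RCLike 𝕜] (a b : ι → ℝ)
    (f : ι → ℝ → 𝕜) :
    ∫ θ in Set.Icc a b, ∏ j, f j (θ j) = ∏ j, ∫ x in Set.Icc (a j) (b j), f j x := by
  rw [← Set.pi_univ_Icc, volume_pi, Measure.restrict_pi_pi, integral_fintype_prod_eq_prod]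

lemma integral_prod_expTwoPiI_zpow_mul_radialPoissonKernel {ι : Type*} [Fintype ι] {t : ℝ}
    (ht : |t| < 1) (α : ι → ℤ) :
    ∫ θ in Set.Icc (0 : ι → ℝ) 1,
        ∏ j, expTwoPiI (θ j) ^ α j * radialPoissonKernel t (expTwoPiI (θ j))
      = ∏ j, (t : ℂ) ^ (α j).natAbs := by
  rw [integral_Icc_pi_prod
    (f := fun j x => expTwoPiI x ^ α j * radialPoissonKernel t (expTwoPiI x))]
  exact prod_congr rfl fun j _ => integral_expTwoPiI_zpow_mul_radialPoissonKernel ht (α j)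

lemma sq_norm_sum_mul_prod_pow {κ ι : Type*} [Fintype κ] [Fintype ι] (c : κ → ℂ)
    (β : κ → ι → ℕ) {z : ι → ℂ} (hz : ∀ j, ‖z j‖ = 1) :
    (‖∑ i, c i * ∏ j, z j ^ β i j‖ ^ 2 : ℂ)
      = ∑ k, ∑ l, c k * conj (c l) * ∏ j, z j ^ ((β k j : ℤ) - β l j) := by
  have hconj (j : ι) : conj (z j) = (z j)⁻¹ := (Complex.inv_eq_conj (hz j)).symm
  have hz0 (j : ι) : z j ≠ 0 := norm_ne_zero_iff.1 (by simp [hz])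
  rw [← Complex.mul_conj', map_sum, sum_mul_sum]
  refine sum_congr rfl fun k _ => sum_congr rfl fun l _ => ?_
  simp only [map_mul, map_prod, map_pow, hconj, zpow_sub₀ (hz0 _), zpow_natCast, div_eq_mul_inv,
    prod_mul_distrib, inv_pow]
  ring

/-- `θ ↦ expTwoPiI ∘ θ` carries Lebesgue measure on the unit box to normalized Haar measure on the
torus, so this is the identity `∑ t^|β_k - β_l| c_k conj(c_l) = ∫ |∑ cᵢ z^βᵢ|² P(t, z) dσ(z)`. -/
lemma sum_sum_prod_pow_natAbs_sub_mul_eq_integral {κ ι : Type*} [Fintype κ] [Fintype ι]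
    {t : ℝ} (ht : |t| < 1) (β : κ → ι → ℕ) (c : κ → ℂ) :
    ∑ k, ∑ l, ((∏ j, t ^ ((β k j : ℤ) - β l j).natAbs : ℝ) : ℂ) * (c k * conj (c l))
      = ((∫ θ in Set.Icc (0 : ι → ℝ) 1, ‖∑ i, c i * ∏ j, expTwoPiI (θ j) ^ β i j‖ ^ 2
          * ∏ j, radialPoissonKernel t (expTwoPiI (θ j)) : ℝ) : ℂ) := by
  set T : κ → κ → (ι → ℝ) → ℂ := fun k l θ => c k * conj (c l) *
    ∏ j, (expTwoPiI (θ j) ^ ((β k j : ℤ) - β l j) * radialPoissonKernel t (expTwoPiI (θ j)))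
  have hT_int (k l : κ) : Integrable (T k l) (volume.restrict (Set.Icc 0 1)) := by
    exact Continuous.integrableOn_Icc (continuous_const.mul (continuous_finsetProd _ fun j _ =>
      ((continuous_expTwoPiI.zpow₀ _ fun θ => .inl (expTwoPiI_ne_zero θ)).mul
        (continuous_ofReal.comp (continuous_radialPoissonKernel_expTwoPiI ht))).comp
          (continuous_apply j)))
  calc _ = ∑ k, ∑ l, ∫ θ in Set.Icc (0 : ι → ℝ) 1, T k l θ := by
        simp only [T, integral_const_mul, integral_prod_expTwoPiI_zpow_mul_radialPoissonKernel ht]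
        push_cast
        simp_rw [mul_comm]
    _ = ∫ θ in Set.Icc (0 : ι → ℝ) 1, ∑ k, ∑ l, T k l θ := by
        rw [integral_finsetSum _ fun k _ => integrable_finsetSum _ fun l _ => hT_int k l]
        exact sum_congr rfl fun k _ => (integral_finsetSum _ fun l _ => hT_int k l).symm
    _ = _ := by
        rw [← integral_complex_ofReal]
        refine integral_congr_ae (.of_forall fun θ => ?_)
        simp only [T, prod_mul_distrib, ← mul_assoc, ← sum_mul]
        push_cast
        rw [sq_norm_sum_mul_prod_pow c β fun j => norm_expTwoPiI (θ j)]

theorem stmt6_general (t : ℝ) (ht0 : 0 < t) (ht1 : t < 1) (K N : ℕ)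
    (β : Fin N → Fin K → ℕ) (c : Fin N → ℂ) :
    (∑ k, ∑ l,
        ((∏ j, t ^ (Int.natAbs ((β k j : ℤ) - (β l j : ℤ)))) : ℝ) * (c k * (starRingEnd ℂ) (c l)))
      = ((∫ θ in Set.Icc (0 : Fin K → ℝ) 1,
            ‖∑ i, c i * ∏ j, Complex.exp (2 * Real.pi * Complex.I * θ j) ^ (β i j)‖ ^ 2
              * ∏ j, (1 - t ^ 2) / ‖1 - (t : ℂ) * Complex.exp (2 * Real.pi * Complex.I * θ j)‖ ^ 2) : ℝ)
    ∧ 0 ≤ ∫ θ in Set.Icc (0 : Fin K → ℝ) 1,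
            ‖∑ i, c i * ∏ j, Complex.exp (2 * Real.pi * Complex.I * θ j) ^ (β i j)‖ ^ 2
              * ∏ j, (1 - t ^ 2) / ‖1 - (t : ℂ) * Complex.exp (2 * Real.pi * Complex.I * θ j)‖ ^ 2 := by
  have ht : |t| < 1 := abs_lt.2 ⟨by linarith, ht1⟩
  exact ⟨sum_sum_prod_pow_natAbs_sub_mul_eq_integral ht β c,
    integral_nonneg fun θ => mul_nonneg (sq_nonneg _)
      (prod_nonneg fun j _ => radialPoissonKernel_nonneg ht.le _)⟩

theorem stmt6 (t : ℝ) (ht0 : 0 < t) (ht1 : t < 1) (K N : ℕ) (hK : 0 < K)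
    (β : Fin N → Fin K → ℕ) (hβ : Function.Injective β) (c : Fin N → ℂ) :
    (∑ k, ∑ l,
        ((∏ j, t ^ (Int.natAbs ((β k j : ℤ) - (β l j : ℤ)))) : ℝ) * (c k * (starRingEnd ℂ) (c l)))
      = ((∫ θ in Set.Icc (0 : Fin K → ℝ) 1,
            ‖∑ i, c i * ∏ j, Complex.exp (2 * Real.pi * Complex.I * θ j) ^ (β i j)‖ ^ 2
              * ∏ j, (1 - t ^ 2) / ‖1 - (t : ℂ) * Complex.exp (2 * Real.pi * Complex.I * θ j)‖ ^ 2) : ℝ)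
    ∧ 0 ≤ ∫ θ in Set.Icc (0 : Fin K → ℝ) 1,
            ‖∑ i, c i * ∏ j, Complex.exp (2 * Real.pi * Complex.I * θ j) ^ (β i j)‖ ^ 2
              * ∏ j, (1 - t ^ 2) / ‖1 - (t : ℂ) * Complex.exp (2 * Real.pi * Complex.I * θ j)‖ ^ 2 :=
  stmt6_general t ht0 ht1 K N β c
end

section
/- Let (a_{kℓ})_{1≤k,ℓ≤N} be a real symmetric positive semidefinite matrix with a_{kk} = 1 for all k, and let c₁,...,c_N be nonnegative reals with ∑ c_k² = 1 and N^{-2} ≤ c_k ≤ 1 for all k. Partition {1,...,N} into the sets 𝒞_ℓ = {j : e^{-ℓ-1} < c_j ≤ e^{-ℓ}} for 0 ≤ ℓ ≤ ⌈2 log N⌉. Then ∑_{k,m=1}^N a_{km} c_k c_m ≤ (⌈2 log N⌉ + 1) · ∑_ℓ ∑_{k,m ∈ 𝒞_ℓ} a_{km} c_k c_m ≤ (⌈2 log N⌉+1) · e² · max_{1≤n≤N} sup over subsets S of size n of (1/n)·∑_{k,m∈S} a_{km}. -/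
/-!
Write `Q x = ∑ₖₘ aₖₘ xₖ xₘ`, a convex function since `Q ≥ 0`, and `M` for the supremum of the
block averages. Splitting `c` into its restrictions `c⁽ˡ⁾` to the level sets `𝒞ₗ`, Jensen's
inequality for `Q` gives `Q c = Q (∑ₗ c⁽ˡ⁾) ≤ (L + 1) ∑ₗ Q c⁽ˡ⁾`. For the second bound, the entries
`aₖₘ` may be negative, so `c⁽ˡ⁾ ≤ e^{-l}` alone does not suffice; instead, `eˡ c⁽ˡ⁾` lies in the box
`[0, 1]^𝒞ₗ`, on whose vertices the convex function `Q` attains its maximum. At the indicator of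
`S ⊆ 𝒞ₗ` it equals `∑_{k,m ∈ S} aₖₘ ≤ |S| M ≤ |𝒞ₗ| M`, and `|𝒞ₗ| ≤ e^{2l+2} ∑_{k ∈ 𝒞ₗ} cₖ²`
because `cₖ > e^{-l-1}` on `𝒞ₗ`. Summing over `l` uses `∑ₖ cₖ² = 1`.
-/

open Finset Real Matrix

section QuadraticForm

variable {ι : Type*} [Fintype ι] (A : Matrix ι ι ℝ)

theorem dotProduct_mulVec_eq_sum_sum (x y : ι → ℝ) :
    x ⬝ᵥ A *ᵥ y = ∑ k, ∑ m, A k m * x k * y m := by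
  simp only [dotProduct, mulVec, Finset.mul_sum]
  exact sum_congr rfl fun _ _ => sum_congr rfl fun _ _ => by ring

theorem smul_dotProduct_mulVec_smul (r : ℝ) (x : ι → ℝ) :
    (r • x) ⬝ᵥ A *ᵥ (r • x) = r ^ 2 * (x ⬝ᵥ A *ᵥ x) := by
  rw [mulVec_smul, smul_dotProduct, dotProduct_smul, smul_eq_mul, smul_eq_mul]
  ring

theorem indicator_dotProduct_mulVec_indicator (S : Finset ι) (c : ι → ℝ) :
    (S : Set ι).indicator c ⬝ᵥ A *ᵥ (S : Set ι).indicator c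
      = ∑ k ∈ S, ∑ m ∈ S, A k m * c k * c m := by
  classical
  simp [dotProduct_mulVec_eq_sum_sum, Set.indicator_apply, mul_ite, ite_mul, sum_ite_mem]

variable {A}

theorem convexOn_dotProduct_mulVec_self (hA : ∀ x, 0 ≤ x ⬝ᵥ A *ᵥ x) :
    ConvexOn ℝ Set.univ fun x => x ⬝ᵥ A *ᵥ x := by
  refine ⟨convex_univ, fun x _ y _ a b ha hb hab => ?_⟩
  have hxy := mul_nonneg (mul_nonneg ha hb) (hA (x - y))
  simp only [mulVec_add, mulVec_sub, mulVec_smul, add_dotProduct, dotProduct_add, sub_dotProduct,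
    dotProduct_sub, smul_dotProduct, dotProduct_smul, smul_eq_mul] at hxy ⊢
  rw [← sub_nonneg]
  have hb' : b = 1 - a := by linarith
  subst hb'
  nlinarith [hxy]

theorem sum_dotProduct_mulVec_sum_le {α : Type*} (hA : ∀ x, 0 ≤ x ⬝ᵥ A *ᵥ x) (s : Finset α)
    (x : α → ι → ℝ) :
    (∑ l ∈ s, x l) ⬝ᵥ A *ᵥ (∑ l ∈ s, x l) ≤ #s * ∑ l ∈ s, x l ⬝ᵥ A *ᵥ x l := by
  rcases s.eq_empty_or_nonempty with rfl | hs
  · simp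
  have hn : (0 : ℝ) < #s := by exact_mod_cast hs.card_pos
  have hJensen := (convexOn_dotProduct_mulVec_self hA).map_sum_le (t := s)
    (w := fun _ => (#s : ℝ)⁻¹) (p := x) (fun _ _ => by positivity) (by simp [hn.ne'])
    (fun _ _ => Set.mem_univ _)
  rw [← smul_sum, ← smul_sum, smul_eq_mul] at hJensen
  rw [← smul_inv_smul₀ hn.ne' (∑ l ∈ s, x l), smul_dotProduct_mulVec_smul]
  calc _ ≤ (#s : ℝ) ^ 2 * ((#s : ℝ)⁻¹ * ∑ l ∈ s, x l ⬝ᵥ A *ᵥ x l) := by gcongr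
    _ = _ := by field_simp

theorem exists_finset_dotProduct_mulVec_self_le_sum_sum (hA : ∀ x, 0 ≤ x ⬝ᵥ A *ᵥ x)
    {t : ι → ℝ} (ht : ∀ i, 0 ≤ t i ∧ t i ≤ 1) :
    ∃ S : Finset ι, (∀ i ∈ S, t i ≠ 0) ∧ t ⬝ᵥ A *ᵥ t ≤ ∑ i ∈ S, ∑ j ∈ S, A i j := by
  classical
  have htV : t ∈ convexHull ℝ (Set.univ.pi fun i => {0, if t i = 0 then 0 else 1}) := by
    rw [convexHull_pi]
    intro i _
    dsimp only
    rw [convexHull_pair, segment_eq_Icc (by split_ifs <;> norm_num)]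
    split_ifs with h <;> simp [h, ht i]
  obtain ⟨y, hyV, hle⟩ :=
    (convexOn_dotProduct_mulVec_self hA).exists_ge_of_mem_convexHull (Set.subset_univ _) htV
  have hy : ∀ i, y i = 0 ∨ (t i ≠ 0 ∧ y i = 1) := fun i => by
    have : y i ∈ ({0, if t i = 0 then 0 else 1} : Set ℝ) := hyV i (Set.mem_univ _)
    split_ifs at this <;> simp_all
  set S := univ.filter (y · ≠ 0)
  have hyS : y = (S : Set ι).indicator 1 := by
    ext i
    rcases hy i with h | h <;> simp [S, h]
  refine ⟨S, fun i hi => ?_, hle.trans_eq ?_⟩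
  · rcases hy i with h | h
    · simp [S, h] at hi
    · exact h.1
  · simp [hyS, indicator_dotProduct_mulVec_indicator]

def blockAverages (A : Matrix ι ι ℝ) : Set ℝ :=
  {x : ℝ | ∃ S : Finset ι, S.Nonempty ∧ x = ((S.card : ℝ))⁻¹ * ∑ k ∈ S, ∑ m ∈ S, A k m}

theorem bddAbove_blockAverages : BddAbove (blockAverages A) :=
  ((Set.finite_range fun S : Finset ι => ((S.card : ℝ))⁻¹ * ∑ k ∈ S, ∑ m ∈ S, A k m).subset
    (by rintro _ ⟨S, -, rfl⟩; exact ⟨S, rfl⟩)).bddAbove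

theorem sSup_blockAverages_nonneg (hA : ∀ x, 0 ≤ x ⬝ᵥ A *ᵥ x) : 0 ≤ sSup (blockAverages A) := by
  refine Real.sSup_nonneg fun x ⟨S, _, hx⟩ => hx ▸ mul_nonneg (by positivity) ?_
  simpa [indicator_dotProduct_mulVec_indicator] using hA ((S : Set ι).indicator 1)

theorem sum_sum_le_card_mul_sSup_blockAverages (S : Finset ι) :
    ∑ k ∈ S, ∑ m ∈ S, A k m ≤ #S * sSup (blockAverages A) := by
  rcases S.eq_empty_or_nonempty with rfl | hS
  · simp
  have hcard : (0 : ℝ) < #S := by exact_mod_cast hS.card_pos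
  exact (inv_mul_le_iff₀ hcard).1 (le_csSup bddAbove_blockAverages ⟨S, hS, rfl⟩)

theorem dotProduct_mulVec_self_le_card_mul_sSup_blockAverages (hA : ∀ x, 0 ≤ x ⬝ᵥ A *ᵥ x)
    {t : ι → ℝ} (ht : ∀ i, 0 ≤ t i ∧ t i ≤ 1) {C : Finset ι} (htC : ∀ i ∉ C, t i = 0) :
    t ⬝ᵥ A *ᵥ t ≤ #C * sSup (blockAverages A) := by
  obtain ⟨S, hS, hle⟩ := exists_finset_dotProduct_mulVec_self_le_sum_sum hA ht
  have hSC : S ⊆ C := fun i hi => by_contra fun hiC => hS i hi (htC i hiC)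
  calc t ⬝ᵥ A *ᵥ t ≤ #S * sSup (blockAverages A) :=
        hle.trans (sum_sum_le_card_mul_sSup_blockAverages S)
    _ ≤ #C * sSup (blockAverages A) := by
      gcongr
      exact sSup_blockAverages_nonneg hA

theorem sum_sum_mul_le_sq_mul_card_mul_sSup_blockAverages (hA : ∀ x, 0 ≤ x ⬝ᵥ A *ᵥ x)
    {C : Finset ι} {c : ι → ℝ} {R : ℝ} (hR : 0 < R) (hc : ∀ k ∈ C, 0 ≤ c k ∧ c k ≤ R) :
    ∑ k ∈ C, ∑ m ∈ C, A k m * c k * c m ≤ R ^ 2 * (#C * sSup (blockAverages A)) := by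
  set t := R⁻¹ • (C : Set ι).indicator c
  have ht : ∀ i, 0 ≤ t i ∧ t i ≤ 1 := fun i => by
    by_cases hi : i ∈ C
    · simp only [t, Pi.smul_apply, Set.indicator_of_mem (mem_coe.2 hi), smul_eq_mul]
      exact ⟨by have := (hc i hi).1; positivity,
        inv_mul_le_one_of_le₀ (hc i hi).2 hR.le⟩
    · simp [t, hi]
  have htC : ∀ i ∉ C, t i = 0 := fun i hi => by simp [t, hi]
  rw [← indicator_dotProduct_mulVec_indicator, ← smul_inv_smul₀ hR.ne' ((C : Set ι).indicator c),
    smul_dotProduct_mulVec_smul]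
  gcongr
  exact dotProduct_mulVec_self_le_card_mul_sSup_blockAverages hA ht htC

end QuadraticForm

section LevelSets

variable {ι : Type*} [Fintype ι]

noncomputable def levelSet (c : ι → ℝ) (l : ℕ) : Finset ι :=
  univ.filter fun j => exp (-(l : ℝ) - 1) < c j ∧ c j ≤ exp (-(l : ℝ))

theorem mem_levelSet_iff_floor_eq {c : ι → ℝ} {k : ι} (hk : 0 < c k ∧ c k ≤ 1) (l : ℕ) :
    k ∈ levelSet c l ↔ ⌊-log (c k)⌋₊ = l := by
  rw [levelSet, mem_filter, and_iff_right (mem_univ k), ← lt_log_iff_exp_lt hk.1,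
    ← log_le_iff_le_exp hk.1, Nat.floor_eq_iff (neg_nonneg.2 (log_nonpos hk.1.le hk.2))]
  constructor <;> rintro ⟨h₁, h₂⟩ <;> constructor <;> linarith

variable {c : ι → ℝ} {L : ℕ}

theorem sum_levelSet_sum (hc : ∀ k, 0 < c k ∧ c k ≤ 1) (hL : ∀ k, ⌊-log (c k)⌋₊ ≤ L)
    (f : ι → ℝ) :
    ∑ l ∈ range (L + 1), ∑ k ∈ levelSet c l, f k = ∑ k, f k := by
  have hfiber : ∀ l, levelSet c l = univ.filter fun k => ⌊-log (c k)⌋₊ = l := fun l => by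
    ext k
    rw [mem_levelSet_iff_floor_eq (hc k), mem_filter, and_iff_right (mem_univ k)]
  simp_rw [hfiber]
  exact sum_fiberwise_of_maps_to (fun k _ => mem_range.2 (Nat.lt_succ_of_le (hL k))) f

theorem sum_indicator_levelSet (hc : ∀ k, 0 < c k ∧ c k ≤ 1) (hL : ∀ k, ⌊-log (c k)⌋₊ ≤ L) :
    ∑ l ∈ range (L + 1), (levelSet c l : Set ι).indicator c = c := by
  classical
  ext k
  simp only [Finset.sum_apply, Set.indicator_apply, mem_coe, mem_levelSet_iff_floor_eq (hc k)]
  rw [sum_ite_eq, if_pos (mem_range.2 (Nat.lt_succ_of_le (hL k)))]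

end LevelSets

section LevelSetBounds

variable {ι : Type*} [Fintype ι] {A : Matrix ι ι ℝ}

theorem dotProduct_mulVec_le_sum_levelSet (hA : ∀ x, 0 ≤ x ⬝ᵥ A *ᵥ x) {c : ι → ℝ}
    (hc : ∀ k, 0 < c k ∧ c k ≤ 1) {L : ℕ} (hL : ∀ k, ⌊-log (c k)⌋₊ ≤ L) :
    c ⬝ᵥ A *ᵥ c ≤ (L + 1) * ∑ l ∈ range (L + 1),
      ∑ k ∈ levelSet c l, ∑ m ∈ levelSet c l, A k m * c k * c m := by
  conv_lhs => rw [← sum_indicator_levelSet hc hL]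
  refine (sum_dotProduct_mulVec_sum_le hA _ _).trans_eq ?_
  simp [indicator_dotProduct_mulVec_indicator]

theorem sum_levelSet_le_exp_two_mul (hA : ∀ x, 0 ≤ x ⬝ᵥ A *ᵥ x) (c : ι → ℝ) (l : ℕ) :
    ∑ k ∈ levelSet c l, ∑ m ∈ levelSet c l, A k m * c k * c m
      ≤ exp 2 * sSup (blockAverages A) * ∑ k ∈ levelSet c l, c k ^ 2 := by
  have hbounds : ∀ k ∈ levelSet c l, exp (-(l : ℝ) - 1) < c k ∧ c k ≤ exp (-(l : ℝ)) :=
    fun k hk => (mem_filter.1 hk).2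
  have hcard : #(levelSet c l) * exp (-(l : ℝ) - 1) ^ 2 ≤ ∑ k ∈ levelSet c l, c k ^ 2 := by
    simpa using card_nsmul_le_sum _ _ _ fun k hk =>
      pow_le_pow_left₀ (exp_pos _).le (hbounds k hk).1.le 2
  have hexp : exp (-(l : ℝ)) ^ 2 = exp 2 * exp (-(l : ℝ) - 1) ^ 2 := by
    rw [← exp_nat_mul, ← exp_nat_mul, ← exp_add]
    ring_nf
  calc _ ≤ exp (-(l : ℝ)) ^ 2 * (#(levelSet c l) * sSup (blockAverages A)) :=
        sum_sum_mul_le_sq_mul_card_mul_sSup_blockAverages hA (exp_pos _)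
          fun k hk => ⟨(exp_pos _).le.trans (hbounds k hk).1.le, (hbounds k hk).2⟩
    _ = exp 2 * sSup (blockAverages A) * (#(levelSet c l) * exp (-(l : ℝ) - 1) ^ 2) := by
        rw [hexp]; ring
    _ ≤ _ := by
        have := sSup_blockAverages_nonneg hA
        gcongr

end LevelSetBounds

theorem stmt14_general (N : ℕ) (a : Fin N → Fin N → ℝ)
    (hpsd : ∀ x : Fin N → ℝ, 0 ≤ ∑ k, ∑ m, a k m * x k * x m)
    (c : Fin N → ℝ) (hcsum : ∑ k, (c k) ^ 2 = 1)
    (hclb : ∀ k, (N : ℝ)⁻¹ ^ 2 ≤ c k) (hcub : ∀ k, c k ≤ 1) :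
    (∑ k, ∑ m, a k m * c k * c m)
        ≤ ((⌈2 * Real.log N⌉₊ : ℝ) + 1) *
            ∑ l ∈ Finset.range (⌈2 * Real.log N⌉₊ + 1),
              ∑ k ∈ Finset.univ.filter
                  (fun j => Real.exp (-(l : ℝ) - 1) < c j ∧ c j ≤ Real.exp (-(l : ℝ))),
                ∑ m ∈ Finset.univ.filter
                    (fun j => Real.exp (-(l : ℝ) - 1) < c j ∧ c j ≤ Real.exp (-(l : ℝ))),
                  a k m * c k * c m
    ∧ ((⌈2 * Real.log N⌉₊ : ℝ) + 1) *
            ∑ l ∈ Finset.range (⌈2 * Real.log N⌉₊ + 1),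
              ∑ k ∈ Finset.univ.filter
                  (fun j => Real.exp (-(l : ℝ) - 1) < c j ∧ c j ≤ Real.exp (-(l : ℝ))),
                ∑ m ∈ Finset.univ.filter
                    (fun j => Real.exp (-(l : ℝ) - 1) < c j ∧ c j ≤ Real.exp (-(l : ℝ))),
                  a k m * c k * c m
        ≤ ((⌈2 * Real.log N⌉₊ : ℝ) + 1) * Real.exp 2 *
            sSup {x : ℝ | ∃ S : Finset (Fin N), S.Nonempty ∧
              x = ((S.card : ℝ))⁻¹ * ∑ k ∈ S, ∑ m ∈ S, a k m} := by
  have hA : ∀ x, 0 ≤ x ⬝ᵥ a *ᵥ x := fun x => (dotProduct_mulVec_eq_sum_sum a x x).symm ▸ hpsd x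
  have hc : ∀ k, 0 < c k ∧ c k ≤ 1 := fun k =>
    ⟨lt_of_lt_of_le (by have := k.pos; positivity) (hclb k), hcub k⟩
  have hL : ∀ k, ⌊-log (c k)⌋₊ ≤ ⌈2 * log N⌉₊ := fun k => by
    have hlog : -log (c k) ≤ 2 * log N := by
      have := log_le_log (by have := k.pos; positivity) (hclb k)
      rw [log_pow, log_inv] at this
      push_cast at this
      linarith
    exact (Nat.floor_mono hlog).trans (Nat.floor_le_ceil _)
  refine ⟨dotProduct_mulVec_eq_sum_sum a c c ▸ dotProduct_mulVec_le_sum_levelSet hA hc hL, ?_⟩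
  rw [mul_assoc _ (exp 2)]
  gcongr
  calc _ ≤ ∑ l ∈ range (⌈2 * log N⌉₊ + 1),
        exp 2 * sSup (blockAverages a) * ∑ k ∈ levelSet c l, c k ^ 2 :=
        sum_le_sum fun l _ => sum_levelSet_le_exp_two_mul hA c l
    _ = exp 2 * sSup (blockAverages a) := by rw [← mul_sum, sum_levelSet_sum hc hL, hcsum, mul_one]

theorem stmt14 (N : ℕ) (hN : 1 ≤ N) (a : Fin N → Fin N → ℝ)
    (hsymm : ∀ k m, a k m = a m k)
    (hpsd : ∀ x : Fin N → ℝ, 0 ≤ ∑ k, ∑ m, a k m * x k * x m)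
    (hdiag : ∀ k, a k k = 1)
    (c : Fin N → ℝ) (hc0 : ∀ k, 0 ≤ c k) (hcsum : ∑ k, (c k) ^ 2 = 1)
    (hclb : ∀ k, (N : ℝ)⁻¹ ^ 2 ≤ c k) (hcub : ∀ k, c k ≤ 1) :
    (∑ k, ∑ m, a k m * c k * c m)
        ≤ ((⌈2 * Real.log N⌉₊ : ℝ) + 1) *
            ∑ l ∈ Finset.range (⌈2 * Real.log N⌉₊ + 1),
              ∑ k ∈ Finset.univ.filter
                  (fun j => Real.exp (-(l : ℝ) - 1) < c j ∧ c j ≤ Real.exp (-(l : ℝ))),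
                ∑ m ∈ Finset.univ.filter
                    (fun j => Real.exp (-(l : ℝ) - 1) < c j ∧ c j ≤ Real.exp (-(l : ℝ))),
                  a k m * c k * c m
    ∧ ((⌈2 * Real.log N⌉₊ : ℝ) + 1) *
            ∑ l ∈ Finset.range (⌈2 * Real.log N⌉₊ + 1),
              ∑ k ∈ Finset.univ.filter
                  (fun j => Real.exp (-(l : ℝ) - 1) < c j ∧ c j ≤ Real.exp (-(l : ℝ))),
                ∑ m ∈ Finset.univ.filter
                    (fun j => Real.exp (-(l : ℝ) - 1) < c j ∧ c j ≤ Real.exp (-(l : ℝ))),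
                  a k m * c k * c m
        ≤ ((⌈2 * Real.log N⌉₊ : ℝ) + 1) * Real.exp 2 *
            sSup {x : ℝ | ∃ S : Finset (Fin N), S.Nonempty ∧
              x = ((S.card : ℝ))⁻¹ * ∑ k ∈ S, ∑ m ∈ S, a k m} :=
  stmt14_general N a hpsd c hcsum hclb hcub
end

section
/- Suppose for each pair of integers 0 ≤ M₁ < M₂ ≤ N, a measurable function T_{M₁,M₂} on (0,1) satisfies ‖T_{M₁,M₂}‖_{L²} ≤ D·(∑_{k=M₁+1}^{M₂} c_k²)^{1/2}, and T_{M₁,M₃} = T_{M₁,M₂} + T_{M₂,M₃} for M₁ < M₂ < M₃. Then ‖max_{1≤M≤N} |T_{0,M}|‖_{L²} ≤ D·(⌈log₂ N⌉ + 1)·(∑_{k=1}^N c_k²)^{1/2}. -/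
/-!
If `N ≤ 2 ^ L`, greedy binary expansion splits every interval `(0, M]` with `M ≤ N` into at most one
aligned dyadic block `(i 2 ^ j, (i + 1) 2 ^ j]` per level `j ≤ L`. By additivity, `|T 0 M|` is then
pointwise at most `∑_{j ≤ L} G_j`, where `G_j` is the square function of the level-`j` blocks.
Those blocks are disjoint, so the hypothesis gives `‖G_j‖₂ ≤ D (∑ c_k²)^{1/2}` at every level, and
Minkowski's inequality over the `L + 1` levels concludes.
-/

open Finset MeasureTheory

lemma Finset.sum_range_sum_Ioc {M : Type*} [AddCommMonoid M] (f : ℕ → M) {a : ℕ → ℕ}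
    (ha : Monotone a) (n : ℕ) :
    ∑ i ∈ range n, ∑ k ∈ Ioc (a i) (a (i + 1)), f k = ∑ k ∈ Ioc (a 0) (a n), f k := by
  induction n with
  | zero => simp
  | succ n ih =>
    rw [sum_range_succ, ih, sum_Ioc_consecutive f (ha (Nat.zero_le n)) (ha n.le_succ)]

lemma le_two_pow_natCeil_logb (N : ℕ) : N ≤ 2 ^ ⌈Real.logb 2 N⌉₊ := by
  rw [show ⌈Real.logb 2 N⌉₊ = Nat.clog 2 N by exact_mod_cast Real.natCeil_logb_natCast 2 N]
  exact Nat.le_pow_clog one_lt_two N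

section L2

variable {α : Type*} [MeasurableSpace α] {μ : Measure α}

lemma lpNorm_two_eq_sqrt_integral_sq {f : α → ℝ} (hf : AEStronglyMeasurable f μ) :
    lpNorm f 2 μ = √(∫ x, f x ^ 2 ∂μ) := by
  rw [show (2 : ENNReal) = ((2 : NNReal) : ENNReal) from rfl,
    lpNorm_nnreal_eq_integral_norm_rpow two_ne_zero hf, Real.sqrt_eq_rpow]
  norm_num

lemma sq_lpNorm_two {f : α → ℝ} (hf : AEStronglyMeasurable f μ) :
    lpNorm f 2 μ ^ 2 = ∫ x, f x ^ 2 ∂μ := by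
  rw [lpNorm_two_eq_sqrt_integral_sq hf, Real.sq_sqrt (integral_nonneg fun x => sq_nonneg _)]

lemma MeasureTheory.MemLp.of_sup'_abs {p : ENNReal} {ι : Type*} {s : Finset ι} (hs : s.Nonempty)
    {f : ι → α → ℝ} (hf : MemLp (fun x => s.sup' hs fun i => |f i x|) p μ) {i : ι} (hi : i ∈ s)
    (hfi : AEStronglyMeasurable (f i) μ) : MemLp (f i) p μ :=
  hf.of_le hfi <| ae_of_all _ fun x => by
    have h : |f i x| ≤ s.sup' hs fun i => |f i x| := le_sup' (fun i => |f i x|) hi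
    rwa [Real.norm_eq_abs, Real.norm_eq_abs, abs_of_nonneg ((abs_nonneg _).trans h)]

variable {ι : Type*} {s : Finset ι} {f : ι → α → ℝ}

lemma aestronglyMeasurable_sqrt_sum_sq (hf : ∀ i ∈ s, AEStronglyMeasurable (f i) μ) :
    AEStronglyMeasurable (fun x => √(∑ i ∈ s, f i x ^ 2)) μ :=
  Real.continuous_sqrt.comp_aestronglyMeasurable <|
    Finset.aestronglyMeasurable_fun_sum s fun i hi => (hf i hi).pow 2

lemma memLp_sqrt_sum_sq (hf : ∀ i ∈ s, MemLp (f i) 2 μ) :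
    MemLp (fun x => √(∑ i ∈ s, f i x ^ 2)) 2 μ := by
  refine (memLp_two_iff_integrable_sq
    (aestronglyMeasurable_sqrt_sum_sq fun i hi => (hf i hi).1)).2 ?_
  simp only [Real.sq_sqrt (sum_nonneg fun i _ => sq_nonneg (f i _))]
  exact integrable_finsetSum s fun i hi => (hf i hi).integrable_sq

lemma lpNorm_sqrt_sum_sq (hf : ∀ i ∈ s, MemLp (f i) 2 μ) :
    lpNorm (fun x => √(∑ i ∈ s, f i x ^ 2)) 2 μ = √(∑ i ∈ s, lpNorm (f i) 2 μ ^ 2) := by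
  rw [lpNorm_two_eq_sqrt_integral_sq (aestronglyMeasurable_sqrt_sum_sq fun i hi => (hf i hi).1)]
  simp only [Real.sq_sqrt (sum_nonneg fun i _ => sq_nonneg (f i _))]
  rw [integral_finsetSum s fun i hi => (hf i hi).integrable_sq]
  exact congrArg _ (sum_congr rfl fun i hi => (sq_lpNorm_two (hf i hi).1).symm)

end L2

section Dyadic

variable {N : ℕ} {T : ℕ → ℕ → ℝ} {g : ℕ → ℝ}
  (hadd : ∀ M₁ M₂ M₃, M₁ < M₂ → M₂ < M₃ → M₃ ≤ N → T M₁ M₃ = T M₁ M₂ + T M₂ M₃)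
  (hg : ∀ j, 0 ≤ g j)
  (hblock : ∀ j s, 2 ^ j ∣ s → s + 2 ^ j ≤ N → |T s (s + 2 ^ j)| ≤ g j)
include hadd hg hblock

lemma abs_le_sum_range_of_dyadic_blocks (j : ℕ) :
    ∀ s M, 2 ^ j ∣ s → 0 < M → M < 2 ^ j → s + M ≤ N → |T s (s + M)| ≤ ∑ j' ∈ range j, g j' := by
  induction j with
  | zero => intro s M _ hM hM1 _; rw [pow_zero] at hM1; omega
  | succ j ih =>
    intro s M hs hM hMj hMN
    have hs' : 2 ^ j ∣ s := (pow_dvd_pow 2 j.le_succ).trans hs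
    have hpow : 2 ^ (j + 1) = 2 ^ j + 2 ^ j := by ring
    have hrest : 0 ≤ ∑ j' ∈ range j, g j' := sum_nonneg fun j' _ => hg j'
    rw [sum_range_succ]
    rcases lt_trichotomy M (2 ^ j) with hlt | rfl | hgt
    · linarith [ih s M hs' hM hlt hMN, hg j]
    · linarith [hblock j s hs' hMN]
    · obtain ⟨M', rfl⟩ := Nat.exists_eq_add_of_lt hgt
      have hsplit := hadd s (s + 2 ^ j) (s + (2 ^ j + M' + 1)) (by omega) (by omega) hMN
      have hfirst := hblock j s hs' (by omega)
      have hsecond := ih (s + 2 ^ j) (M' + 1) (dvd_add hs' dvd_rfl) (by omega) (by omega)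
        (by omega)
      rw [show s + 2 ^ j + (M' + 1) = s + (2 ^ j + M' + 1) by ring] at hsecond
      rw [hsplit]
      linarith [abs_add_le (T s (s + 2 ^ j)) (T (s + 2 ^ j) (s + (2 ^ j + M' + 1)))]

lemma abs_le_sum_range_succ_of_dyadic_blocks {L M : ℕ} (hM : 0 < M) (hMN : M ≤ N)
    (hML : M ≤ 2 ^ L) : |T 0 M| ≤ ∑ j ∈ range (L + 1), g j := by
  rw [sum_range_succ]
  rcases hML.lt_or_eq with hlt | rfl
  · have h := abs_le_sum_range_of_dyadic_blocks hadd hg hblock L 0 M (dvd_zero _) hM hlt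
      (by omega)
    rw [zero_add] at h
    linarith [hg L]
  · have h := hblock L 0 (dvd_zero _) (by omega)
    rw [zero_add] at h
    linarith [sum_nonneg fun j (_ : j ∈ range L) => hg j]

end Dyadic

noncomputable def squareFunction {α : Type*} (T : ℕ → ℕ → α → ℝ) (a : ℕ → ℕ) (n : ℕ) (x : α) :
    ℝ :=
  √(∑ i ∈ range n, T (a i) (a (i + 1)) x ^ 2)

section SquareFunction

variable {α : Type*} {T : ℕ → ℕ → α → ℝ}

lemma abs_le_squareFunction (a : ℕ → ℕ) {n i : ℕ} (hi : i < n) (x : α) :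
    |T (a i) (a (i + 1)) x| ≤ squareFunction T a n x :=
  Real.abs_le_sqrt <| single_le_sum (f := fun i => T (a i) (a (i + 1)) x ^ 2)
    (fun _ _ => sq_nonneg _) (mem_range.2 hi)

lemma dyadic_block_bounds {N j i : ℕ} (hi : i < N / 2 ^ j) :
    i * 2 ^ j < (i + 1) * 2 ^ j ∧ (i + 1) * 2 ^ j ≤ N :=
  ⟨Nat.mul_lt_mul_of_pos_right i.lt_succ_self (Nat.two_pow_pos j),
    (Nat.le_div_iff_mul_le (Nat.two_pow_pos j)).1 hi⟩

lemma abs_le_dyadic_squareFunction {N j s : ℕ} (hs : 2 ^ j ∣ s) (hsN : s + 2 ^ j ≤ N) (x : α) :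
    |T s (s + 2 ^ j) x| ≤ squareFunction T (· * 2 ^ j) (N / 2 ^ j) x := by
  obtain ⟨i, rfl⟩ := hs
  have hi : i < N / 2 ^ j := (Nat.le_div_iff_mul_le (Nat.two_pow_pos j)).2 (by linarith)
  have h := abs_le_squareFunction (T := T) (· * 2 ^ j) hi x
  rwa [show (i + 1) * 2 ^ j = 2 ^ j * i + 2 ^ j by ring, mul_comm i] at h

lemma sup'_abs_le_sum_dyadic_squareFunction {N L : ℕ} (hN : 1 ≤ N) (hNL : N ≤ 2 ^ L)
    (hadd : ∀ M₁ M₂ M₃, M₁ < M₂ → M₂ < M₃ → M₃ ≤ N → ∀ x, T M₁ M₃ x = T M₁ M₂ x + T M₂ M₃ x)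
    (x : α) :
    ((Icc 1 N).sup' (nonempty_Icc.2 hN) fun M => |T 0 M x|)
      ≤ ∑ j ∈ range (L + 1), squareFunction T (· * 2 ^ j) (N / 2 ^ j) x := by
  refine sup'_le _ _ fun M hM => ?_
  obtain ⟨hM, hMN⟩ := mem_Icc.1 hM
  exact abs_le_sum_range_succ_of_dyadic_blocks (T := fun a b => T a b x)
    (fun a b c hab hbc hc => hadd a b c hab hbc hc x) (fun j => Real.sqrt_nonneg _)
    (fun j s hs hsN => abs_le_dyadic_squareFunction hs hsN x) hM hMN (hMN.trans hNL)

variable [MeasurableSpace α] {μ : Measure α}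

lemma memLp_squareFunction {a : ℕ → ℕ} {n : ℕ}
    (hT : ∀ i < n, MemLp (T (a i) (a (i + 1))) 2 μ) : MemLp (squareFunction T a n) 2 μ :=
  memLp_sqrt_sum_sq fun i hi => hT i (mem_range.1 hi)

lemma lpNorm_squareFunction_le {c : ℕ → ℝ} {D : ℝ} (hD : 0 ≤ D)
    {a : ℕ → ℕ} (ha : Monotone a) {n : ℕ} (hT : ∀ i < n, MemLp (T (a i) (a (i + 1))) 2 μ)
    (hnorm : ∀ i < n, lpNorm (T (a i) (a (i + 1))) 2 μ
      ≤ D * √(∑ k ∈ Ioc (a i) (a (i + 1)), c k ^ 2)) :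
    lpNorm (squareFunction T a n) 2 μ ≤ D * √(∑ k ∈ Ioc (a 0) (a n), c k ^ 2) := by
  unfold squareFunction
  rw [lpNorm_sqrt_sum_sq fun i hi => hT i (mem_range.1 hi),
    ← Finset.sum_range_sum_Ioc _ ha, ← Real.sqrt_sq hD, ← Real.sqrt_mul (sq_nonneg D), mul_sum]
  gcongr with i hi
  rw [← Real.sq_sqrt (sum_nonneg fun k _ => sq_nonneg (c k)), ← mul_pow]
  exact pow_le_pow_left₀ lpNorm_nonneg (hnorm i (mem_range.1 hi)) 2

variable {N : ℕ} (hmem : ∀ M₁ M₂, M₁ < M₂ → M₂ ≤ N → MemLp (T M₁ M₂) 2 μ)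
include hmem

lemma memLp_dyadic_squareFunction (j : ℕ) :
    MemLp (squareFunction T (· * 2 ^ j) (N / 2 ^ j)) 2 μ :=
  memLp_squareFunction fun _ hi => hmem _ _ (dyadic_block_bounds hi).1 (dyadic_block_bounds hi).2

lemma lpNorm_dyadic_squareFunction_le {c : ℕ → ℝ} {D : ℝ} (hD : 0 ≤ D)
    (hnorm : ∀ M₁ M₂, M₁ < M₂ → M₂ ≤ N →
      lpNorm (T M₁ M₂) 2 μ ≤ D * √(∑ k ∈ Ioc M₁ M₂, c k ^ 2)) (j : ℕ) :
    lpNorm (squareFunction T (· * 2 ^ j) (N / 2 ^ j)) 2 μ ≤ D * √(∑ k ∈ Icc 1 N, c k ^ 2) := by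
  refine (lpNorm_squareFunction_le hD (fun _ _ hij => Nat.mul_le_mul_right _ hij)
    (fun _ hi => hmem _ _ (dyadic_block_bounds hi).1 (dyadic_block_bounds hi).2)
    (fun _ hi => hnorm _ _ (dyadic_block_bounds hi).1 (dyadic_block_bounds hi).2)).trans ?_
  gcongr
  intro k hk
  have := Nat.div_mul_le_self N (2 ^ j)
  simp only [mem_Ioc, mem_Icc] at hk ⊢
  omega

end SquareFunction

lemma memLp_of_additive {α : Type*} [MeasurableSpace α] {μ : Measure α} {p : ENNReal} {N : ℕ}
    {T : ℕ → ℕ → α → ℝ}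
    (hadd : ∀ M₁ M₂ M₃, M₁ < M₂ → M₂ < M₃ → M₃ ≤ N → ∀ x, T M₁ M₃ x = T M₁ M₂ x + T M₂ M₃ x)
    (h0 : ∀ M, 0 < M → M ≤ N → MemLp (T 0 M) p μ) {M₁ M₂ : ℕ} (h12 : M₁ < M₂) (h2N : M₂ ≤ N) :
    MemLp (T M₁ M₂) p μ := by
  rcases Nat.eq_zero_or_pos M₁ with rfl | hM₁
  · exact h0 M₂ h12 h2N
  · have h : T M₁ M₂ = T 0 M₂ - T 0 M₁ := by
      funext x
      rw [Pi.sub_apply, hadd 0 M₁ M₂ hM₁ h12 h2N x]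
      ring
    rw [h]
    exact (h0 M₂ (hM₁.trans h12) h2N).sub (h0 M₁ hM₁ (h12.le.trans h2N))

theorem rademacher_menshov_maximal_ineq {α : Type*} [MeasurableSpace α] {μ : Measure α}
    {N L : ℕ} (hN : 1 ≤ N) (hNL : N ≤ 2 ^ L) {T : ℕ → ℕ → α → ℝ}
    (hmeas : ∀ M, AEStronglyMeasurable (T 0 M) μ) {c : ℕ → ℝ} {D : ℝ} (hD : 0 ≤ D)
    (hnorm : ∀ M₁ M₂, M₁ < M₂ → M₂ ≤ N →
      lpNorm (T M₁ M₂) 2 μ ≤ D * √(∑ k ∈ Ioc M₁ M₂, c k ^ 2))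
    (hadd : ∀ M₁ M₂ M₃, M₁ < M₂ → M₂ < M₃ → M₃ ≤ N → ∀ x, T M₁ M₃ x = T M₁ M₂ x + T M₂ M₃ x) :
    lpNorm (fun x => (Icc 1 N).sup' (nonempty_Icc.2 hN) fun M => |T 0 M x|) 2 μ
      ≤ D * (L + 1) * √(∑ k ∈ Icc 1 N, c k ^ 2) := by
  -- `lpNorm` is `0` outside `L²`; inside, the maximal function puts every block in `L²`.
  by_cases hS : MemLp (fun x => (Icc 1 N).sup' (nonempty_Icc.2 hN) fun M => |T 0 M x|) 2 μ
  swap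
  · rw [lpNorm_of_not_memLp hS]
    positivity
  have hmem M₁ M₂ (h12 : M₁ < M₂) (h2N : M₂ ≤ N) : MemLp (T M₁ M₂) 2 μ :=
    memLp_of_additive hadd (fun M hM hMN =>
      hS.of_sup'_abs _ (mem_Icc.2 ⟨hM, hMN⟩) (hmeas M)) h12 h2N
  set G := fun j => squareFunction T (· * 2 ^ j) (N / 2 ^ j)
  have hG j : MemLp (G j) 2 μ := memLp_dyadic_squareFunction hmem j
  calc _ ≤ lpNorm (∑ j ∈ range (L + 1), G j) 2 μ := by
        refine lpNorm_mono_real (memLp_finsetSum' _ fun j _ => hG j) fun x => ?_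
        have hx := le_sup' (fun M => |T 0 M x|) (mem_Icc.2 ⟨hN, le_rfl⟩)
        rw [Real.norm_of_nonneg ((abs_nonneg _).trans hx), Finset.sum_apply]
        exact sup'_abs_le_sum_dyadic_squareFunction hN hNL hadd x
    _ ≤ ∑ j ∈ range (L + 1), lpNorm (G j) 2 μ := lpNorm_sum_le (fun j _ => hG j) one_le_two
    _ ≤ ∑ j ∈ range (L + 1), D * √(∑ k ∈ Icc 1 N, c k ^ 2) :=
        sum_le_sum fun j _ => lpNorm_dyadic_squareFunction_le hmem hD hnorm j
    _ = D * (L + 1) * √(∑ k ∈ Icc 1 N, c k ^ 2) := by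
        rw [sum_const, card_range, nsmul_eq_mul]
        push_cast
        ring

theorem stmt17 (N : ℕ) (hN : 1 ≤ N) (T : ℕ → ℕ → ℝ → ℝ)
    (hmeas : ∀ M₁ M₂, Measurable (T M₁ M₂))
    (c : ℕ → ℝ) (D : ℝ) (hD : 0 ≤ D)
    (hnorm : ∀ M₁ M₂, M₁ < M₂ → M₂ ≤ N →
      Real.sqrt (∫ x in Set.Ioo (0:ℝ) 1, (T M₁ M₂ x) ^ 2)
        ≤ D * Real.sqrt (∑ k ∈ Finset.Ioc M₁ M₂, (c k) ^ 2))
    (hadd : ∀ M₁ M₂ M₃, M₁ < M₂ → M₂ < M₃ → M₃ ≤ N →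
      ∀ x, T M₁ M₃ x = T M₁ M₂ x + T M₂ M₃ x) :
    Real.sqrt (∫ x in Set.Ioo (0:ℝ) 1,
        ((Finset.Icc 1 N).sup' (Finset.nonempty_Icc.2 hN) (fun M => |T 0 M x|)) ^ 2)
      ≤ D * ((⌈Real.logb 2 N⌉₊ : ℝ) + 1) * Real.sqrt (∑ k ∈ Finset.Icc 1 N, (c k) ^ 2) := by
  have hS : Measurable fun x => (Icc 1 N).sup' (nonempty_Icc.2 hN) fun M => |T 0 M x| := by
    convert Finset.measurable_sup' (nonempty_Icc.2 hN) fun M _ => (hmeas 0 M).abs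
    rw [Finset.sup'_apply]
  rw [← lpNorm_two_eq_sqrt_integral_sq hS.aestronglyMeasurable]
  refine rademacher_menshov_maximal_ineq hN (le_two_pow_natCeil_logb N)
    (fun M => (hmeas 0 M).aestronglyMeasurable) hD (fun M₁ M₂ h12 h2N => ?_) hadd
  rw [lpNorm_two_eq_sqrt_integral_sq (hmeas M₁ M₂).aestronglyMeasurable]
  exact hnorm M₁ M₂ h12 h2N
end
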